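/- Let k ≥ 1 be an integer. For all real numbers y, z and every integer n ≥ 0, ∑_{m=0}^n c_k(m, y) · c_k(n−m, z) = c_k(n, y+z). -/
import Mathlib

open scoped BigOperators

def Omega (k n : ℕ) : Finset (Fin k → ℕ) :=
  (Fintype.piFinset fun _ => Finset.range (n + 1)).filter
    (fun x => ∑ i, (i.1 + 1) * x i = n)

def zeta {k : ℕ} (x : Fin k → ℕ) : ℕ := ∑ i, x i

def pifact {k : ℕ} (x : Fin k → ℕ) : ℕ := ∏ i, (x i).factorial

noncomputable def ck (k n : ℕ) (y : ℝ) : ℝ :=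
  ∑ x ∈ Omega k n, y ^ zeta x / (pifact x : ℝ)

lemma mem_Omega {k n : ℕ} {x : Fin k → ℕ} : x ∈ Omega k n ↔ ∑ i, (i.1 + 1) * x i = n := by
  constructor
  · exact fun h => (Finset.mem_filter.1 h).2
  · intro h
    refine Finset.mem_filter.2 ⟨Fintype.mem_piFinset.2 fun i => Finset.mem_range.2 ?_, h⟩
    have h1 : x i ≤ (i.1 + 1) * x i := Nat.le_mul_of_pos_left _ (Nat.succ_pos _)
    have h2 : (i.1 + 1) * x i ≤ n := h ▸ Finset.single_le_sum
      (f := fun j : Fin k => (j.1 + 1) * x j) (fun _ _ => Nat.zero_le _) (Finset.mem_univ i)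
    omega

lemma g_eq {k : ℕ} (x : Fin k → ℕ) (w : ℝ) :
    w ^ zeta x / (pifact x : ℝ) = ∏ i, w ^ x i / (x i).factorial := by
  rw [zeta, pifact, ← Finset.prod_pow_eq_pow_sum, Nat.cast_prod, Finset.prod_div_distrib]

lemma binom_div (y z : ℝ) (m : ℕ) :
    (y + z) ^ m / m.factorial =
      ∑ j ∈ Finset.range (m + 1), y ^ j / j.factorial * (z ^ (m - j) / (m - j).factorial) := by
  rw [add_pow, Finset.sum_div]
  refine Finset.sum_congr rfl fun j hj => ?_
  have hjm : j ≤ m := Nat.lt_succ_iff.1 (Finset.mem_range.1 hj)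
  have key : (m.choose j : ℝ) * j.factorial * (m - j).factorial = m.factorial := by
    exact_mod_cast congrArg (Nat.cast : ℕ → ℝ) (Nat.choose_mul_factorial_mul_factorial hjm)
  have h1 : (j.factorial : ℝ) ≠ 0 := Nat.cast_ne_zero.2 j.factorial_ne_zero
  have h2 : ((m - j).factorial : ℝ) ≠ 0 := Nat.cast_ne_zero.2 (m - j).factorial_ne_zero
  have h3 : (m.factorial : ℝ) ≠ 0 := Nat.cast_ne_zero.2 m.factorial_ne_zero
  field_simp
  rw [← key]; ring

lemma g_add {k : ℕ} (x : Fin k → ℕ) (y z : ℝ) :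
    (y + z) ^ zeta x / (pifact x : ℝ) =
      ∑ a ∈ Fintype.piFinset (fun i => Finset.range (x i + 1)),
        y ^ zeta a / (pifact a : ℝ) * (z ^ zeta (x - a) / (pifact (x - a) : ℝ)) := by
  rw [g_eq]
  simp_rw [binom_div]
  rw [Finset.prod_univ_sum]
  refine Finset.sum_congr rfl fun a ha => ?_
  rw [Finset.prod_mul_distrib, ← g_eq, ← g_eq]
  rfl

/-- Convolution identity: `∑_{m=0}^n c_k(m,y) c_k(n−m,z) = c_k(n, y+z)`. -/
theorem ck_convolution (k : ℕ) (hk : 1 ≤ k) (y z : ℝ) (n : ℕ) :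
    ∑ m ∈ Finset.range (n + 1), ck k m y * ck k (n - m) z = ck k n (y + z) := by
  have hR : ck k n (y + z) =
      ∑ p ∈ (Omega k n).sigma (fun x => Fintype.piFinset fun i => Finset.range (x i + 1)),
        y ^ zeta p.2 / (pifact p.2 : ℝ) * (z ^ zeta (p.1 - p.2) / (pifact (p.1 - p.2) : ℝ)) := by
    rw [ck]
    simp_rw [g_add]
    rw [Finset.sum_sigma']
  have hL : (∑ m ∈ Finset.range (n + 1), ck k m y * ck k (n - m) z) =
      ∑ p ∈ (Finset.range (n + 1)).sigma (fun m => Omega k m ×ˢ Omega k (n - m)),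
        y ^ zeta p.2.1 / (pifact p.2.1 : ℝ) * (z ^ zeta p.2.2 / (pifact p.2.2 : ℝ)) := by
    simp_rw [ck, Finset.sum_mul_sum, ← Finset.sum_product']
    rw [Finset.sum_sigma']
  rw [hL, hR]
  refine Finset.sum_bij' (fun p _ => (⟨p.2.1 + p.2.2, p.2.1⟩ : Σ x : Fin k → ℕ, Fin k → ℕ))
    (fun q _ => (⟨∑ i, (i.1 + 1) * q.2 i, (q.2, q.1 - q.2)⟩ : Σ m : ℕ, (Fin k → ℕ) × (Fin k → ℕ)))
    ?_ ?_ ?_ ?_ ?_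
  · rintro ⟨m, a, b⟩ hp
    simp only [Finset.mem_sigma, Finset.mem_range, Finset.mem_product] at hp
    obtain ⟨hm, ha, hb⟩ := hp
    have ha' := mem_Omega.1 ha
    have hb' := mem_Omega.1 hb
    refine Finset.mem_sigma.2 ⟨mem_Omega.2 ?_, Fintype.mem_piFinset.2 fun i => Finset.mem_range.2 ?_⟩
    · simp only [Pi.add_apply, Nat.mul_add, Finset.sum_add_distrib, ha', hb']
      omega
    · simp only [Pi.add_apply]; omega
  · rintro ⟨x, a⟩ hq
    simp only [Finset.mem_sigma, Fintype.mem_piFinset, Finset.mem_range] at hq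
    obtain ⟨hx, ha⟩ := hq
    have hx' := mem_Omega.1 hx
    have hle : ∀ i, a i ≤ x i := fun i => Nat.lt_succ_iff.1 (ha i)
    have hsplit : (∑ i, (i.1 + 1) * a i) + ∑ i, (i.1 + 1) * ((x - a) i) = n := by
      rw [← Finset.sum_add_distrib, ← hx']
      refine Finset.sum_congr rfl fun i _ => ?_
      simp only [Pi.sub_apply, ← Nat.mul_add, Nat.add_sub_cancel' (hle i)]
    refine Finset.mem_sigma.2 ⟨Finset.mem_range.2 ?_, Finset.mem_product.2 ⟨mem_Omega.2 rfl, mem_Omega.2 ?_⟩⟩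
    · exact Nat.lt_succ_of_le (Nat.le.intro hsplit)
    · exact Nat.eq_sub_of_add_eq (by rw [Nat.add_comm]; exact hsplit)
  · rintro ⟨m, a, b⟩ hp
    simp only [Finset.mem_sigma, Finset.mem_range, Finset.mem_product] at hp
    obtain ⟨hm, ha, hb⟩ := hp
    have ha' := mem_Omega.1 ha
    refine Sigma.ext ?_ (heq_of_eq ?_)
    · simp [ha']
    · refine Prod.ext rfl ?_
      funext i
      simp only [Pi.sub_apply, Pi.add_apply]
      omega
  · rintro ⟨x, a⟩ hq
    simp only [Finset.mem_sigma, Fintype.mem_piFinset, Finset.mem_range] at hq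
    obtain ⟨hx, ha⟩ := hq
    refine Sigma.ext ?_ (heq_of_eq rfl)
    · funext i
      have := Nat.lt_succ_iff.1 (ha i)
      simp only [Pi.add_apply, Pi.sub_apply]
      omega
  · rintro ⟨m, a, b⟩ hp
    have hab : a + b - a = b := by
      funext i; simp only [Pi.sub_apply, Pi.add_apply]; omega
    simp only [hab]
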